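/- arXiv:2412.02008 — 9 statements merged into one kernel-verified Lean document; each statement's English description precedes it below -/
import Mathlib

section
/- The set {(ℓ, k) ∈ ℕ × ℕ : 1 ≤ ℓ ∧ ℓ ≤ 2^(k+1)} is not a semilinear subset of ℕ². -/
/-!
The fibres of the set over a fixed second coordinate are bounded, so no linear component
`b + ℕx₁ + ⋯ + ℕx_m` can have a horizontal period. Then every period satisfies
`xⱼ 0 ≤ C * xⱼ 1` with `C = ∑ⱼ xⱼ 0`, so each component, and hence the whole semilinear set,
lies below a line `v 0 ≤ A + C * v 1`, which the points `(2^(k+1), k)` eventually cross.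
-/

/-- A subset of `ℕ^d` (indexed by `ι`) is linear if it is
`{b + a₁x₁ + ⋯ + a_m x_m : aᵢ ∈ ℕ}` for some base `b` and periods `xᵢ`. -/
def IsLinearSetNat {ι : Type*} (S : Set (ι → ℕ)) : Prop :=
  ∃ (b : ι → ℕ) (m : ℕ) (x : Fin m → ι → ℕ),
    S = {v | ∃ a : Fin m → ℕ, v = b + ∑ i, a i • x i}

/-- A subset of `ℕ^d` is semilinear if it is a finite union of linear sets. -/
def IsSemilinearSetNat {ι : Type*} (S : Set (ι → ℕ)) : Prop :=
  ∃ (k : ℕ) (L : Fin k → Set (ι → ℕ)),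
    (∀ i, IsLinearSetNat (L i)) ∧ S = ⋃ i, L i

section LinearBound

variable {ι : Type*} (p q : ι)

lemma exists_mul_bound_of_forall_eq_zero {m : ℕ} (x : Fin m → ι → ℕ)
    (hx : ∀ j, x j q = 0 → x j p = 0) : ∃ C, ∀ j, x j p ≤ C * x j q := by
  refine ⟨∑ j, x j p, fun j => ?_⟩
  rcases Nat.eq_zero_or_pos (x j q) with h | h
  · simp [hx j h]
  · calc x j p ≤ ∑ j, x j p :=
          Finset.single_le_sum (f := fun j => x j p) (fun _ _ => Nat.zero_le _) (Finset.mem_univ j)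
      _ ≤ (∑ j, x j p) * x j q := Nat.le_mul_of_pos_right _ h

lemma add_sum_smul_apply_le {m : ℕ} (b : ι → ℕ) (x : Fin m → ι → ℕ) (a : Fin m → ℕ) {C : ℕ}
    (hC : ∀ j, x j p ≤ C * x j q) :
    (b + ∑ j, a j • x j) p ≤ b p + C * (b + ∑ j, a j • x j) q := by
  simp only [Pi.add_apply, Finset.sum_apply, Pi.smul_apply, smul_eq_mul, mul_add, Finset.mul_sum]
  have hsum : ∑ j, a j * x j p ≤ ∑ j, C * (a j * x j q) :=
    Finset.sum_le_sum fun j _ => by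
      calc a j * x j p ≤ a j * (C * x j q) := Nat.mul_le_mul_left _ (hC j)
        _ = C * (a j * x j q) := by ring
  omega

theorem IsLinearSetNat.exists_linear_bound {L : Set (ι → ℕ)} (hL : IsLinearSetNat L)
    (hfib : ∀ c, ∃ B, ∀ v ∈ L, v q = c → v p ≤ B) :
    ∃ A C, ∀ v ∈ L, v p ≤ A + C * v q := by
  obtain ⟨b, m, x, rfl⟩ := hL
  -- a horizontal period `x j` would make the fibre over `b q` unbounded
  have hx : ∀ j, x j q = 0 → x j p = 0 := by
    intro j hjq
    by_contra hjp
    obtain ⟨B, hB⟩ := hfib (b q)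
    have hmem : b + (B + 1) • x j ∈ {v | ∃ a : Fin m → ℕ, v = b + ∑ i, a i • x i} :=
      ⟨Pi.single j (B + 1), by simp [Pi.single_apply, ite_smul]⟩
    have := hB _ hmem (by simp [hjq])
    simp only [Pi.add_apply, Pi.smul_apply, smul_eq_mul] at this
    nlinarith [Nat.one_le_iff_ne_zero.mpr hjp]
  obtain ⟨C, hC⟩ := exists_mul_bound_of_forall_eq_zero p q x hx
  refine ⟨b p, C, ?_⟩
  rintro v ⟨a, rfl⟩
  exact add_sum_smul_apply_le p q b x a hC

theorem IsSemilinearSetNat.exists_linear_bound {S : Set (ι → ℕ)} (hS : IsSemilinearSetNat S)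
    (hfib : ∀ c, ∃ B, ∀ v ∈ S, v q = c → v p ≤ B) :
    ∃ A C, ∀ v ∈ S, v p ≤ A + C * v q := by
  obtain ⟨n, L, hL, rfl⟩ := hS
  have hbound i : ∃ A C, ∀ v ∈ L i, v p ≤ A + C * v q :=
    (hL i).exists_linear_bound p q fun c =>
      (hfib c).imp fun _ hB v hv => hB v (Set.mem_iUnion_of_mem i hv)
  choose A C hAC using hbound
  refine ⟨∑ i, A i, ∑ i, C i, fun v hv => ?_⟩
  obtain ⟨i, hv⟩ := Set.mem_iUnion.mp hv
  have hA := Finset.single_le_sum (fun i _ => Nat.zero_le (A i)) (Finset.mem_univ i)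
  have hC := Finset.single_le_sum (fun i _ => Nat.zero_le (C i)) (Finset.mem_univ i)
  calc v p ≤ A i + C i * v q := hAC i v hv
    _ ≤ ∑ i, A i + (∑ i, C i) * v q := by gcongr

end LinearBound

lemma mul_succ_lt_two_pow_succ (k : ℕ) : k * (k + 1) < 2 ^ (k + 1) := by
  induction k with
  | zero => simp
  | succ k ih =>
    rw [pow_succ]
    rcases k with _ | _ | k
    · norm_num
    · norm_num
    · nlinarith

/-- The set `{(ℓ, k) : 1 ≤ ℓ ∧ ℓ ≤ 2^(k+1)}` is not semilinear. -/
theorem not_semilinear_pow :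
    ¬ IsSemilinearSetNat {v : Fin 2 → ℕ | 1 ≤ v 0 ∧ v 0 ≤ 2 ^ (v 1 + 1)} := by
  intro hS
  obtain ⟨A, C, hAC⟩ := hS.exists_linear_bound 0 1 fun c =>
    ⟨2 ^ (c + 1), fun v hv hc => hc ▸ hv.2⟩
  set k := A + C
  have hk : 2 ^ (k + 1) ≤ A + C * k := by
    simpa using hAC ![2 ^ (k + 1), k] ⟨Nat.one_le_two_pow, le_rfl⟩
  have hAk : A + C * k ≤ k * (k + 1) := by
    have : C * k ≤ k * k := Nat.mul_le_mul_right k (Nat.le_add_left C A)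
    rw [Nat.mul_succ]
    omega
  exact (hk.trans hAk).not_gt (mul_succ_lt_two_pow_succ k)
end

section
/- Consider the population protocol on state set {1,2,3,4,a,b,c,d} with transitions 1c→2d, 2b→1d, 1a→3b, 3d→4c, 4b→3c, 3a→1b (all other interactions are no-ops). For any configuration C containing exactly one agent in a numbered state q ∈ {1,2,3,4}, define f(C) = 2^a(2c+d) if q=1, 2^a(2c+d+1) if q=2, 2^a(2d+c) if q=3, 2^a(2d+c+1) if q=4, where a,b,c,d denote the counts of agents in states a,b,c,d. Then f is non-increasing along every transition: if C → C' in one step, then f(C') ≤ f(C). -/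
/-- A configuration of the doubling protocol on states `{1,2,3,4,a,b,c,d}`,
recorded as counts of agents in each state. -/
structure Conf where
  n1 : ℕ
  n2 : ℕ
  n3 : ℕ
  n4 : ℕ
  a : ℕ
  b : ℕ
  c : ℕ
  d : ℕ

/-- One step of the protocol with transitions
`1c→2d, 2b→1d, 1a→3b, 3d→4c, 4b→3c, 3a→1b` (all other interactions are no-ops,
which do not change the count vector). -/
def DStep (C C' : Conf) : Prop :=
  (1 ≤ C.n1 ∧ 1 ≤ C.c ∧ C' = ⟨C.n1 - 1, C.n2 + 1, C.n3, C.n4, C.a, C.b, C.c - 1, C.d + 1⟩) ∨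
  (1 ≤ C.n2 ∧ 1 ≤ C.b ∧ C' = ⟨C.n1 + 1, C.n2 - 1, C.n3, C.n4, C.a, C.b - 1, C.c, C.d + 1⟩) ∨
  (1 ≤ C.n1 ∧ 1 ≤ C.a ∧ C' = ⟨C.n1 - 1, C.n2, C.n3 + 1, C.n4, C.a - 1, C.b + 1, C.c, C.d⟩) ∨
  (1 ≤ C.n3 ∧ 1 ≤ C.d ∧ C' = ⟨C.n1, C.n2, C.n3 - 1, C.n4 + 1, C.a, C.b, C.c + 1, C.d - 1⟩) ∨
  (1 ≤ C.n4 ∧ 1 ≤ C.b ∧ C' = ⟨C.n1, C.n2, C.n3 + 1, C.n4 - 1, C.a, C.b - 1, C.c + 1, C.d⟩) ∨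
  (1 ≤ C.n3 ∧ 1 ≤ C.a ∧ C' = ⟨C.n1 + 1, C.n2, C.n3 - 1, C.n4, C.a - 1, C.b + 1, C.c, C.d⟩)

/-- `C` has exactly one agent in a numbered state. -/
def OneNumbered (C : Conf) : Prop :=
  C.n1 + C.n2 + C.n3 + C.n4 = 1

/-- The potential function `f` (meaningful when `C` has exactly one numbered agent). -/
def fPot (C : Conf) : ℕ :=
  if C.n1 = 1 then 2 ^ C.a * (2 * C.c + C.d)
  else if C.n2 = 1 then 2 ^ C.a * (2 * C.c + C.d + 1)
  else if C.n3 = 1 then 2 ^ C.a * (2 * C.d + C.c)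
  else 2 ^ C.a * (2 * C.d + C.c + 1)

/-! Write `f = 2^a · g`. Each of the four transitions that do not touch `a` changes `g` by
`±1` through the numbered state and by `∓1` through the counts `b, c, d`, so it keeps `f`
unchanged. The two transitions that consume an `a` halve `2^a`,
while `g` switches between `2c + d` and `2d + c`, which at most doubles it. -/

theorem two_pow_sub_one_mul_le {a x y : ℕ} (ha : 1 ≤ a) (hxy : x ≤ 2 * y) :
    2 ^ (a - 1) * x ≤ 2 ^ a * y :=
  calc 2 ^ (a - 1) * x ≤ 2 ^ (a - 1) * (2 * y) := by gcongr
    _ = 2 ^ a * y := by rw [← mul_assoc, pow_sub_one_mul (by omega)]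

section

variable {n1 n2 n3 n4 a b c d : ℕ}

theorem fPot_mk_of_n1 (h1 : n1 = 1) :
    fPot ⟨n1, n2, n3, n4, a, b, c, d⟩ = 2 ^ a * (2 * c + d) := by
  simp [fPot, h1]

theorem fPot_mk_of_n2 (h1 : n1 = 0) (h2 : n2 = 1) :
    fPot ⟨n1, n2, n3, n4, a, b, c, d⟩ = 2 ^ a * (2 * c + d + 1) := by
  simp [fPot, h1, h2]

theorem fPot_mk_of_n3 (h1 : n1 = 0) (h2 : n2 = 0) (h3 : n3 = 1) :
    fPot ⟨n1, n2, n3, n4, a, b, c, d⟩ = 2 ^ a * (2 * d + c) := by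
  simp [fPot, h1, h2, h3]

theorem fPot_mk_of_n4 (h1 : n1 = 0) (h2 : n2 = 0) (h3 : n3 = 0) :
    fPot ⟨n1, n2, n3, n4, a, b, c, d⟩ = 2 ^ a * (2 * d + c + 1) := by
  simp [fPot, h1, h2, h3]

end

/-- `f` is non-increasing along every transition. -/
theorem fPot_nonincreasing (C C' : Conf) (h1 : OneNumbered C) (h : DStep C C') :
    fPot C' ≤ fPot C := by
  unfold OneNumbered at h1
  rcases h with ⟨h₁, hc, rfl⟩ | ⟨h₂, -, rfl⟩ | ⟨h₁, ha, rfl⟩ | ⟨h₃, hd, rfl⟩ |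
    ⟨h₄, -, rfl⟩ | ⟨h₃, ha, rfl⟩
  · rw [fPot_mk_of_n2 (by omega) (by omega), fPot_mk_of_n1 (by omega)]
    exact Nat.mul_le_mul_left _ (by omega)
  · rw [fPot_mk_of_n1 (by omega), fPot_mk_of_n2 (by omega) (by omega)]
    exact Nat.mul_le_mul_left _ (by omega)
  · rw [fPot_mk_of_n3 (by omega) (by omega) (by omega), fPot_mk_of_n1 (by omega)]
    exact two_pow_sub_one_mul_le ha (by omega)
  · rw [fPot_mk_of_n4 (by omega) (by omega) (by omega),
      fPot_mk_of_n3 (by omega) (by omega) (by omega)]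
    exact Nat.mul_le_mul_left _ (by omega)
  · rw [fPot_mk_of_n3 (by omega) (by omega) (by omega),
      fPot_mk_of_n4 (by omega) (by omega) (by omega)]
    exact Nat.mul_le_mul_left _ (by omega)
  · rw [fPot_mk_of_n1 (by omega), fPot_mk_of_n3 (by omega) (by omega) (by omega)]
    exact two_pow_sub_one_mul_le ha (by omega)
end

section
/- With the protocol and function f from the previous context: the transitions 1c→2d and 2b→1d preserve f exactly, i.e., if C → C' by one of these transitions then f(C') = f(C). -/
theorem fPot_of_n1_eq_one {C : Conf} (h : C.n1 = 1) : fPot C = 2 ^ C.a * (2 * C.c + C.d) :=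
  if_pos h

theorem fPot_of_n2_eq_one {C : Conf} (hC : OneNumbered C) (h : C.n2 = 1) :
    fPot C = 2 ^ C.a * (2 * C.c + C.d + 1) := by
  have h1 : C.n1 ≠ 1 := by unfold OneNumbered at hC; omega
  simp only [fPot, if_neg h1, if_pos h]

/-- The transitions `1c→2d` and `2b→1d` preserve `f` exactly. -/
theorem fPot_preserved_1c_2b (C C' : Conf) (h1 : OneNumbered C)
    (h : (1 ≤ C.n1 ∧ 1 ≤ C.c ∧
            C' = ⟨C.n1 - 1, C.n2 + 1, C.n3, C.n4, C.a, C.b, C.c - 1, C.d + 1⟩) ∨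
         (1 ≤ C.n2 ∧ 1 ≤ C.b ∧
            C' = ⟨C.n1 + 1, C.n2 - 1, C.n3, C.n4, C.a, C.b - 1, C.c, C.d + 1⟩)) :
    fPot C' = fPot C := by
  have hsum : C.n1 + C.n2 + C.n3 + C.n4 = 1 := h1
  rcases h with ⟨hn1, hc, rfl⟩ | ⟨hn2, -, rfl⟩
  · have hC' : OneNumbered ⟨C.n1 - 1, C.n2 + 1, C.n3, C.n4, C.a, C.b, C.c - 1, C.d + 1⟩ := by
      simp only [OneNumbered]; omega
    rw [fPot_of_n2_eq_one hC' (by simp only; omega), fPot_of_n1_eq_one (by omega)]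
    dsimp only
    congr 1
    -- `2 (c - 1) + (d + 1) + 1 = 2 c + d`, with no truncation since `1 ≤ c`
    omega
  · rw [fPot_of_n1_eq_one (by simp only; omega), fPot_of_n2_eq_one h1 (by omega)]
    rfl
end

section
/- With the protocol from the previous context: for every k ≥ 0, starting from the configuration C₀ with one agent in state 1, k agents in state a, one agent in state c, no agents in state d, and at least 2^(k+1) agents in state b, there is a reachable configuration C' in which the total count of agents in states c and d equals 2^(k+1). -/
/-!
In state `1`, the pair of transitions `1c→2d, 2b→1d` turns every `c` into two `d`s at the cost of
one `b`; then `1a→3b` hands over to state `3`, where `3d→4c, 4b→3c` double the `d`s back into `c`s.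
The protocol is symmetric under `1↔3, 2↔4, c↔d`, so each of the `k` agents in state `a` buys one
more doubling of the `m` agents in `c ∪ d`. The `k + 1` doublings consume
`m + 2m + ⋯ + 2^k m = m (2^(k+1) - 1)` agents in state `b`.
-/

open Relation

def Conf.swap (C : Conf) : Conf := ⟨C.n3, C.n4, C.n1, C.n2, C.a, C.b, C.d, C.c⟩

lemma DStep.swap {C C' : Conf} (h : DStep C C') : DStep C.swap C'.swap := by
  unfold DStep at h ⊢
  rcases h with h | h | h | h | h | h <;> obtain ⟨h₁, h₂, rfl⟩ := h <;> simp_all [Conf.swap]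

lemma reflTransGen_dStep_swap {C C' : Conf} (h : ReflTransGen DStep C C') :
    ReflTransGen DStep C.swap C'.swap :=
  h.lift Conf.swap fun _ _ => DStep.swap

lemma reflTransGen_dStep_double (a b c d n : ℕ) :
    ReflTransGen DStep ⟨1, 0, 0, 0, a, b + n, c + n, d⟩ ⟨1, 0, 0, 0, a, b, c, d + 2 * n⟩ := by
  induction n generalizing d with
  | zero => rfl
  | succ n ih =>
    have toTwo : DStep ⟨1, 0, 0, 0, a, b + (n + 1), c + (n + 1), d⟩
        ⟨0, 1, 0, 0, a, b + (n + 1), c + n, d + 1⟩ :=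
      Or.inl ⟨le_rfl, Nat.le_add_left _ _, rfl⟩
    have toOne : DStep ⟨0, 1, 0, 0, a, b + (n + 1), c + n, d + 1⟩
        ⟨1, 0, 0, 0, a, b + n, c + n, d + 2⟩ :=
      Or.inr <| Or.inl ⟨le_rfl, Nat.le_add_left _ _, rfl⟩
    rw [show d + 2 * (n + 1) = d + 2 + 2 * n by ring]
    exact .head toTwo <| .head toOne <| ih (d + 2)

lemma reflTransGen_dStep_all_d (a b m : ℕ) :
    ReflTransGen DStep ⟨1, 0, 0, 0, a, b + m, m, 0⟩ ⟨1, 0, 0, 0, a, b, 0, 2 * m⟩ := by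
  simpa using reflTransGen_dStep_double a b 0 0 m

lemma dStep_one_to_three (k b d : ℕ) :
    DStep ⟨1, 0, 0, 0, k + 1, b, 0, d⟩ (Conf.swap ⟨1, 0, 0, 0, k, b + 1, d, 0⟩) :=
  Or.inr <| Or.inr <| Or.inl ⟨le_rfl, Nat.le_add_left _ _, rfl⟩

lemma le_of_mul_two_pow_succ_le_add {k m b : ℕ} (h : m * 2 ^ (k + 1) ≤ b + m) : m ≤ b := by
  have : m * 2 ≤ m * 2 ^ (k + 1) := Nat.mul_le_mul_left m (Nat.le_self_pow (by omega) 2)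
  omega

lemma exists_reflTransGen_dStep_c_add_d_eq (k m b : ℕ) (hb : m * 2 ^ (k + 1) ≤ b + m) :
    ∃ C' : Conf, ReflTransGen DStep ⟨1, 0, 0, 0, k, b, m, 0⟩ C' ∧
      C'.c + C'.d = 2 ^ (k + 1) * m := by
  induction k generalizing m b
  all_goals obtain ⟨b, rfl⟩ := Nat.exists_eq_add_of_le' (le_of_mul_two_pow_succ_le_add hb)
  case zero => exact ⟨_, reflTransGen_dStep_all_d 0 b m, by simp⟩
  case succ k ih =>
    obtain ⟨C', hreach, hcd⟩ := ih (2 * m) (b + 1) (by rw [pow_succ] at hb; linarith)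
    refine ⟨C'.swap, ?_, ?_⟩
    · exact (reflTransGen_dStep_all_d (k + 1) b m).tail (dStep_one_to_three k b _)
        |>.trans (reflTransGen_dStep_swap hreach)
    · simp only [Conf.swap, pow_succ] at hcd ⊢
      linarith

/-- From the configuration with one agent in state 1, `k` agents in state `a`, one in
state `c`, none in `d`, and at least `2^(k+1)` agents in state `b`, some reachable
configuration has exactly `2^(k+1)` agents in states `c` and `d` combined. -/
theorem reach_pow (k B : ℕ) (hB : 2 ^ (k + 1) ≤ B) :
    ∃ C' : Conf,
      Relation.ReflTransGen DStep ⟨1, 0, 0, 0, k, B, 1, 0⟩ C' ∧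
      C'.c + C'.d = 2 ^ (k + 1) := by
  simpa using exists_reflTransGen_dStep_c_add_d_eq k 1 B (by omega)
end

section
/- With the protocol from the previous context: for every k ≥ 0 and every ℓ with 1 ≤ ℓ ≤ 2^(k+1), starting from the configuration with one agent in state 1, k agents in state a, one agent in state c, no agents in state d, and at least 2^(k+1) agents in state b, there is a reachable configuration in which the total count of agents in states c and d equals ℓ. -/
open Relation

theorem Relation.ReflTransGen.exists_map_eq_of_le_succ {α : Type*} {r : α → α → Prop} (f : α → ℕ)
    (hf : ∀ ⦃x y⦄, r x y → f y ≤ f x + 1) {x y : α} {n : ℕ} (hxy : ReflTransGen r x y)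
    (hx : f x ≤ n) (hy : n ≤ f y) : ∃ z, ReflTransGen r x z ∧ f z = n := by
  induction hxy with
  | refl => exact ⟨x, .refl, by omega⟩
  | @tail y z hxy hyz ih =>
    by_cases hn : n ≤ f y
    · exact ih hn
    · exact ⟨z, hxy.tail hyz, by have := hf hyz; omega⟩

def Conf.mirror (C : Conf) : Conf := ⟨C.n3, C.n4, C.n1, C.n2, C.a, C.b, C.d, C.c⟩

theorem DStep.cd_le_succ {C C' : Conf} (h : DStep C C') : C'.c + C'.d ≤ C.c + C.d + 1 := by
  rcases h with ⟨-, -, rfl⟩ | ⟨-, -, rfl⟩ | ⟨-, -, rfl⟩ | ⟨-, -, rfl⟩ | ⟨-, -, rfl⟩ | ⟨-, -, rfl⟩ <;>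
    dsimp only <;> omega

theorem DStep.mirror {C C' : Conf} (h : DStep C C') : DStep C.mirror C'.mirror := by
  unfold DStep Conf.mirror
  rcases h with ⟨h₁, h₂, rfl⟩ | ⟨h₁, h₂, rfl⟩ | ⟨h₁, h₂, rfl⟩ | ⟨h₁, h₂, rfl⟩ | ⟨h₁, h₂, rfl⟩ |
    ⟨h₁, h₂, rfl⟩ <;> simp_all

theorem reflTransGen_dStep_mirror {C C' : Conf} (h : ReflTransGen DStep C C') :
    ReflTransGen DStep C.mirror C'.mirror :=
  ReflTransGen.lift Conf.mirror (fun _ _ => DStep.mirror) _ _ h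

theorem reflTransGen_dStep_double_c (a b c d : ℕ) (h : c ≤ b) :
    ReflTransGen DStep ⟨1, 0, 0, 0, a, b, c, d⟩ ⟨1, 0, 0, 0, a, b - c, 0, d + 2 * c⟩ := by
  induction c generalizing b d with
  | zero => exact .refl
  | succ c ih =>
    have use_c : DStep ⟨1, 0, 0, 0, a, b, c + 1, d⟩ ⟨0, 1, 0, 0, a, b, c, d + 1⟩ :=
      Or.inl ⟨le_rfl, c.succ_pos, rfl⟩
    have use_b : DStep ⟨0, 1, 0, 0, a, b, c, d + 1⟩ ⟨1, 0, 0, 0, a, b - 1, c, d + 2⟩ :=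
      Or.inr <| Or.inl ⟨le_rfl, show 1 ≤ b by omega, rfl⟩
    have rest := ih (b - 1) (d + 2) (by omega)
    rw [show b - 1 - c = b - (c + 1) by omega, show d + 2 + 2 * c = d + 2 * (c + 1) by ring]
      at rest
    exact .head use_c (.head use_b rest)

-- The rounds consume `c + 2c + ⋯ + 2^k c = (2^(k+1) - 1) c` agents in state `b`.
theorem exists_reflTransGen_dStep_cd_eq (k B c : ℕ) (hB : 2 ^ (k + 1) * c ≤ B + c) :
    ∃ C', ReflTransGen DStep ⟨1, 0, 0, 0, k, B, c, 0⟩ C' ∧ C'.c + C'.d = 2 ^ (k + 1) * c := by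
  induction k generalizing B c with
  | zero =>
    exact ⟨_, reflTransGen_dStep_double_c 0 B c 0 (by omega), by dsimp only; omega⟩
  | succ k ih =>
    rw [pow_succ, mul_assoc] at hB
    have hcB : c ≤ B := by
      have : 2 * c ≤ 2 ^ (k + 1) * (2 * c) := Nat.le_mul_of_pos_left _ (Nat.two_pow_pos _)
      omega
    have double := reflTransGen_dStep_double_c (k + 1) B c 0 hcB
    have use_a : DStep ⟨1, 0, 0, 0, k + 1, B - c, 0, 0 + 2 * c⟩
        (Conf.mirror ⟨1, 0, 0, 0, k, B - c + 1, 2 * c, 0⟩) :=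
      Or.inr <| Or.inr <| Or.inl ⟨le_rfl, k.succ_pos, by simp [Conf.mirror]⟩
    obtain ⟨C', hC', hsum⟩ := ih (B - c + 1) (2 * c) (by omega)
    refine ⟨C'.mirror, (double.tail use_a).trans (reflTransGen_dStep_mirror hC'), ?_⟩
    simp only [Conf.mirror] at hsum ⊢
    rw [pow_succ, mul_assoc]
    omega

/-- From the configuration with one agent in state 1, `k` agents in state `a`, one in
state `c`, none in `d`, and at least `2^(k+1)` agents in state `b`, every value
`1 ≤ ℓ ≤ 2^(k+1)` occurs as the combined `c`/`d` count of some reachable configuration. -/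
theorem reach_every_value (k B ℓ : ℕ) (hB : 2 ^ (k + 1) ≤ B)
    (hℓ1 : 1 ≤ ℓ) (hℓ2 : ℓ ≤ 2 ^ (k + 1)) :
    ∃ C' : Conf,
      Relation.ReflTransGen DStep ⟨1, 0, 0, 0, k, B, 1, 0⟩ C' ∧
      C'.c + C'.d = ℓ := by
  obtain ⟨C₁, hC₁, hsum⟩ := exists_reflTransGen_dStep_cd_eq k B 1 (by omega)
  exact hC₁.exists_map_eq_of_le_succ (fun C => C.c + C.d) (fun _ _ => DStep.cd_le_succ)
    hℓ1 (by omega)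
end

section
/- There exists a population protocol whose reachability relation, viewed as a subset of ℕ^d × ℕ^d of pairs of configuration count vectors (C, C') with C →* C', is not semilinear. -/
/-- One step of a population protocol described by count vectors: a rule
`((p,q),(p',q'))` applies to two distinct agents in states `p` and `q` and moves them
to states `p'` and `q'`. -/
def CountStep {Q : Type*} [DecidableEq Q]
    (rules : Finset ((Q × Q) × (Q × Q))) (C C' : Q → ℕ) : Prop :=
  ∃ r ∈ rules,
    (if r.1.1 = r.1.2 then 2 ≤ C r.1.1 else 1 ≤ C r.1.1 ∧ 1 ≤ C r.1.2) ∧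
    C' = fun s =>
      C s - (if s = r.1.1 then 1 else 0) - (if s = r.1.2 then 1 else 0)
          + (if s = r.2.1 then 1 else 0) + (if s = r.2.2 then 1 else 0)

/-!
With a single agent in the control states `q₁ … q₄` the protocol is a counter machine: the
rules `q₁c → q₂d, q₂b → q₁d` turn every `c` into two `d`s, the rules `q₃d → q₄c, q₄b → q₃c` turn
every `d` into two `c`s, and the rules `q₁a → q₃b, q₃a → q₁b` spend one `a` to switch between
the two phases. Hence `2m` copies of `a` turn one `c` into `2 · 4^m` copies
of `d`. Conversely, the potential `2^#a · V`, where `V` counts a `c` twice and a `d` once in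
phase `q₁` (and the other way round in phase `q₃`), never increases, so with fewer than `2m`
copies of `a` at most `4^m` copies of `d` appear.

A semilinear set can be pumped down: there is a bound `M` such that every point with a
coordinate above `M` is the sum of a point of the set and a vector bounded by `M` that is
positive in that coordinate. Pumping down the number of `a`s in the doubling run gives a
reachable pair with fewer `a`s but more than `2 · 4^m - M > 4^m` copies of `d`.
-/

section Pumping

variable {ι : Type*}

def PumpsDownAbove (M : ℕ) (S : Set (ι → ℕ)) : Prop :=
  ∀ v ∈ S, ∀ i, M < v i → ∃ w ∈ S, ∃ u : ι → ℕ, v = w + u ∧ 0 < u i ∧ ∀ j, u j ≤ M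

theorem PumpsDownAbove.mono {M N : ℕ} {S : Set (ι → ℕ)} (h : PumpsDownAbove M S)
    (hMN : M ≤ N) : PumpsDownAbove N S := by
  intro v hv i hi
  obtain ⟨w, hw, u, rfl, hui, huM⟩ := h v hv i (hMN.trans_lt hi)
  exact ⟨w, hw, u, rfl, hui, fun j => (huM j).trans hMN⟩

theorem PumpsDownAbove.iUnion {k : ℕ} {S : Fin k → Set (ι → ℕ)} {M : ℕ}
    (h : ∀ l, PumpsDownAbove M (S l)) : PumpsDownAbove M (⋃ l, S l) := by
  intro v hv i hi
  obtain ⟨l, hvl⟩ := Set.mem_iUnion.mp hv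
  obtain ⟨w, hw, hrest⟩ := h l v hvl i hi
  exact ⟨w, Set.mem_iUnion.mpr ⟨l, hw⟩, hrest⟩

theorem sum_smul_eq_sum_sub_single_smul_add {m : ℕ} {x : Fin m → ι → ℕ} {a : Fin m → ℕ}
    {k : Fin m} (hk : 0 < a k) :
    ∑ l, a l • x l = ∑ l, (a - Pi.single k 1 : Fin m → ℕ) l • x l + x k := by
  have ha : a = (a - Pi.single k 1) + Pi.single k 1 := by
    ext l
    rcases eq_or_ne l k with rfl | hl
    · simp only [Pi.add_apply, Pi.sub_apply, Pi.single_eq_same]; omega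
    · simp [hl]
  conv_lhs => rw [ha]
  simp [add_smul, Finset.sum_add_distrib, Pi.single_apply]

theorem IsLinearSetNat.exists_pumpsDownAbove [Finite ι] {S : Set (ι → ℕ)}
    (hS : IsLinearSetNat S) : ∃ M, PumpsDownAbove M S := by
  obtain ⟨b, m, x, rfl⟩ := hS
  obtain ⟨Mb, hb⟩ := Finite.exists_le b
  obtain ⟨Mx, hx⟩ := Finite.exists_le fun p : Fin m × ι => x p.1 p.2
  refine ⟨max Mb Mx, ?_⟩
  rintro _ ⟨a, rfl⟩ i hi
  have hsum : (∑ l, a l • x l) i ≠ 0 := by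
    have := hb i
    simp only [Pi.add_apply] at hi
    omega
  obtain ⟨k, hak, hxk⟩ : ∃ k, a k ≠ 0 ∧ x k i ≠ 0 := by simpa using hsum
  refine ⟨b + ∑ l, (a - Pi.single k 1 : Fin m → ℕ) l • x l, ⟨_, rfl⟩, x k, ?_,
    Nat.pos_of_ne_zero hxk, fun j => (hx (k, j)).trans (le_max_right _ _)⟩
  rw [sum_smul_eq_sum_sub_single_smul_add (Nat.pos_of_ne_zero hak), add_assoc]

theorem IsSemilinearSetNat.exists_pumpsDownAbove [Finite ι] {S : Set (ι → ℕ)}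
    (hS : IsSemilinearSetNat S) : ∃ M, PumpsDownAbove M S := by
  obtain ⟨k, L, hL, rfl⟩ := hS
  choose M hM using fun l => (hL l).exists_pumpsDownAbove
  obtain ⟨N, hN⟩ := Finite.exists_le M
  exact ⟨N, PumpsDownAbove.iUnion fun l => (hM l).mono (hN l)⟩

end Pumping

inductive HPState
  | q₁ | q₂ | q₃ | q₄ | a | b | c | d
  deriving DecidableEq

namespace HPState

instance : Fintype HPState where
  elems := {q₁, q₂, q₃, q₄, a, b, c, d}
  complete s := by cases s <;> decide

def rules : Finset ((HPState × HPState) × (HPState × HPState)) :=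
  {((q₁, c), (q₂, d)), ((q₂, b), (q₁, d)), ((q₁, a), (q₃, b)),
   ((q₃, d), (q₄, c)), ((q₄, b), (q₃, c)), ((q₃, a), (q₁, b))}

abbrev Reaches : (HPState → ℕ) → (HPState → ℕ) → Prop :=
  Relation.ReflTransGen (CountStep rules)

def config (q : HPState) (na nb nc nd : ℕ) : HPState → ℕ
  | a => na
  | b => nb
  | c => nc
  | d => nd
  | s => if s = q then 1 else 0

def controlCount (C : HPState → ℕ) : ℕ := C q₁ + C q₂ + C q₃ + C q₄

-- In `q₂` (resp. `q₄`) the control agent still owes one `d` (resp. `c`), hence the `+ 1`.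
def potential (C : HPState → ℕ) : ℕ :=
  C q₁ * (C d + 2 * C c) + C q₂ * (C d + 2 * C c + 1) +
    C q₃ * (C c + 2 * C d) + C q₄ * (C c + 2 * C d + 1)

section Runs

variable (na nb nc nd : ℕ)

theorem countStep_q₁_c :
    CountStep rules (config q₁ na nb (nc + 1) nd) (config q₂ na nb nc (nd + 1)) := by
  refine ⟨((q₁, c), (q₂, d)), by decide, by simp [config], ?_⟩
  funext s; cases s <;> simp [config]

theorem countStep_q₂_b :
    CountStep rules (config q₂ na (nb + 1) nc nd) (config q₁ na nb nc (nd + 1)) := by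
  refine ⟨((q₂, b), (q₁, d)), by decide, by simp [config], ?_⟩
  funext s; cases s <;> simp [config]

theorem countStep_q₁_a :
    CountStep rules (config q₁ (na + 1) nb nc nd) (config q₃ na (nb + 1) nc nd) := by
  refine ⟨((q₁, a), (q₃, b)), by decide, by simp [config], ?_⟩
  funext s; cases s <;> simp [config]

theorem countStep_q₃_d :
    CountStep rules (config q₃ na nb nc (nd + 1)) (config q₄ na nb (nc + 1) nd) := by
  refine ⟨((q₃, d), (q₄, c)), by decide, by simp [config], ?_⟩
  funext s; cases s <;> simp [config]

theorem countStep_q₄_b :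
    CountStep rules (config q₄ na (nb + 1) nc nd) (config q₃ na nb (nc + 1) nd) := by
  refine ⟨((q₄, b), (q₃, c)), by decide, by simp [config], ?_⟩
  funext s; cases s <;> simp [config]

theorem countStep_q₃_a :
    CountStep rules (config q₃ (na + 1) nb nc nd) (config q₁ na (nb + 1) nc nd) := by
  refine ⟨((q₃, a), (q₁, b)), by decide, by simp [config], ?_⟩
  funext s; cases s <;> simp [config]

theorem reaches_c_to_d (t : ℕ) :
    Reaches (config q₁ na (nb + t) (nc + t) nd) (config q₁ na nb nc (nd + 2 * t)) := by
  induction t generalizing nd with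
  | zero => rfl
  | succ t ih =>
    rw [show nd + 2 * (t + 1) = nd + 1 + 1 + 2 * t by ring]
    exact .head (countStep_q₁_c ..) (.head (countStep_q₂_b ..) (ih _))

theorem reaches_d_to_c (t : ℕ) :
    Reaches (config q₃ na (nb + t) nc (nd + t)) (config q₃ na nb (nc + 2 * t) nd) := by
  induction t generalizing nc with
  | zero => rfl
  | succ t ih =>
    rw [show nc + 2 * (t + 1) = nc + 1 + 1 + 2 * t by ring]
    exact .head (countStep_q₃_d ..) (.head (countStep_q₄_b ..) (ih _))

end Runs

theorem exists_reaches_doubling (j n nb : ℕ) (hn : 2 * 4 ^ j * n ≤ nb + n) :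
    ∃ nb', Reaches (config q₁ (2 * j) nb n 0) (config q₁ 0 nb' 0 (2 * 4 ^ j * n)) := by
  induction j generalizing n nb with
  | zero =>
    obtain ⟨k, rfl⟩ : ∃ k, nb = k + n := ⟨nb - n, by omega⟩
    exact ⟨k, by simpa using reaches_c_to_d 0 k 0 0 n⟩
  | succ j ih =>
    have hn' : 8 * (4 ^ j * n) ≤ nb + n := by rw [pow_succ] at hn; linarith
    have hjn : n ≤ 4 ^ j * n := Nat.le_mul_of_pos_left n (by positivity)
    obtain ⟨k, rfl⟩ : ∃ k, nb = k + 2 * n + n := ⟨nb - 3 * n, by omega⟩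
    obtain ⟨nb', hreach⟩ := ih (0 + 2 * (2 * n)) (k + 1 + 1)
      (by rw [show 2 * 4 ^ j * (0 + 2 * (2 * n)) = 8 * (4 ^ j * n) by ring]; omega)
    refine ⟨nb', ?_⟩
    have hcd := reaches_c_to_d (2 * j + 1 + 1) (k + 2 * n) 0 0 n
    have hq₁a := countStep_q₁_a (2 * j + 1) (k + 2 * n) 0 (0 + 2 * n)
    have hdc := reaches_d_to_c (2 * j + 1) (k + 1) 0 0 (2 * n)
    have hq₃a := countStep_q₃_a (2 * j) (k + 1) (0 + 2 * (2 * n)) 0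
    rw [zero_add] at hcd
    refine hcd.trans (.head hq₁a ?_)
    convert hdc.trans (.head hq₃a hreach) using 2 <;> ring

theorem controlCount_mono : Monotone controlCount := fun C D h => by
  simp only [controlCount]; gcongr <;> apply h

theorem potential_mono : Monotone potential := fun C D h => by
  simp only [potential]; gcongr <;> apply h

theorem controlCount_mul_le_potential (C : HPState → ℕ) :
    controlCount C * C d ≤ potential C := by
  simp only [controlCount, potential, add_mul]
  gcongr <;> omega

theorem controlCount_eq_of_countStep {C C' : HPState → ℕ} (h : CountStep rules C C') :
    controlCount C' = controlCount C := by
  obtain ⟨r, hr, hpre, rfl⟩ := h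
  simp only [rules, Finset.mem_insert, Finset.mem_singleton] at hr
  rcases hr with rfl | rfl | rfl | rfl | rfl | rfl <;>
    simp only [reduceCtorEq, ↓reduceIte, controlCount, tsub_zero, add_zero] at hpre ⊢ <;> omega

theorem not_countStep_of_controlCount_eq_zero {C C' : HPState → ℕ} (h0 : controlCount C = 0) :
    ¬ CountStep rules C C' := by
  rintro ⟨r, hr, hpre, -⟩
  simp only [rules, Finset.mem_insert, Finset.mem_singleton] at hr
  simp only [controlCount] at h0
  rcases hr with rfl | rfl | rfl | rfl | rfl | rfl <;>
    simp only [reduceCtorEq, ↓reduceIte] at hpre <;> omega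

theorem potential_le_of_countStep {C C' : HPState → ℕ} (h : CountStep rules C C')
    (h1 : controlCount C = 1) :
    C' a = C a ∧ potential C' ≤ potential C ∨
      C' a + 1 = C a ∧ potential C' ≤ 2 * potential C := by
  obtain ⟨r, hr, hpre, rfl⟩ := h
  simp only [rules, Finset.mem_insert, Finset.mem_singleton] at hr
  have hcontrol : (C q₁ = 1 ∧ C q₂ = 0 ∧ C q₃ = 0 ∧ C q₄ = 0) ∨
      (C q₁ = 0 ∧ C q₂ = 1 ∧ C q₃ = 0 ∧ C q₄ = 0) ∨ (C q₁ = 0 ∧ C q₂ = 0 ∧ C q₃ = 1 ∧ C q₄ = 0) ∨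
      (C q₁ = 0 ∧ C q₂ = 0 ∧ C q₃ = 0 ∧ C q₄ = 1) := by
    simp only [controlCount] at h1; omega
  rcases hr with rfl | rfl | rfl | rfl | rfl | rfl <;>
    rcases hcontrol with
      ⟨e₁, e₂, e₃, e₄⟩ | ⟨e₁, e₂, e₃, e₄⟩ | ⟨e₁, e₂, e₃, e₄⟩ | ⟨e₁, e₂, e₃, e₄⟩ <;>
    simp [potential, e₁, e₂, e₃, e₄] at hpre ⊢ <;> omega

section Reaches

variable {C C' : HPState → ℕ}

theorem controlCount_eq_of_reaches (h : Reaches C C') : controlCount C' = controlCount C := by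
  induction h with
  | refl => rfl
  | tail _ hstep ih => rw [controlCount_eq_of_countStep hstep, ih]

theorem eq_of_reaches_of_controlCount_eq_zero (h : Reaches C C') (h0 : controlCount C = 0) :
    C' = C :=
  (Relation.ReflTransGen.cases_head h).elim Eq.symm
    fun ⟨_, hstep, _⟩ => absurd hstep (not_countStep_of_controlCount_eq_zero h0)

theorem two_pow_mul_potential_le_of_reaches (h : Reaches C C') (h1 : controlCount C = 1) :
    2 ^ C' a * potential C' ≤ 2 ^ C a * potential C := by
  induction h with
  | refl => exact le_rfl
  | @tail D D' hreach hstep ih =>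
    rcases potential_le_of_countStep hstep ((controlCount_eq_of_reaches hreach).trans h1) with
      ⟨ha, hV⟩ | ⟨ha, hV⟩
    · rw [ha]; exact (Nat.mul_le_mul_left _ hV).trans ih
    · calc 2 ^ D' a * potential D' ≤ 2 ^ D' a * (2 * potential D) :=
            Nat.mul_le_mul_left _ hV
        _ = 2 ^ D a * potential D := by rw [← ha, pow_succ]; ring
        _ ≤ _ := ih

theorem count_d_le_of_reaches (h : Reaches C C') (hC : controlCount C ≤ 1) :
    C' d ≤ C d + 2 ^ C a * potential C := by
  rcases Nat.le_one_iff_eq_zero_or_eq_one.mp hC with h0 | h1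
  · rw [eq_of_reaches_of_controlCount_eq_zero h h0]; omega
  · calc C' d = controlCount C' * C' d := by rw [controlCount_eq_of_reaches h, h1, one_mul]
      _ ≤ potential C' := controlCount_mul_le_potential C'
      _ ≤ 2 ^ C' a * potential C' := Nat.le_mul_of_pos_left _ (by positivity)
      _ ≤ 2 ^ C a * potential C := two_pow_mul_potential_le_of_reaches h h1
      _ ≤ C d + 2 ^ C a * potential C := Nat.le_add_left _ _

theorem count_d_le_of_reaches_of_le {m nb : ℕ} (h : Reaches C C')
    (hC : C ≤ config q₁ (2 * m) nb 1 0) (ha : C a < 2 * m) : C' d ≤ 4 ^ m := by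
  have hcontrol : controlCount C ≤ 1 := controlCount_mono hC
  have hpot : potential C ≤ 2 := potential_mono hC
  have hd : C d = 0 := Nat.le_zero.mp (hC d)
  calc C' d ≤ C d + 2 ^ C a * potential C := count_d_le_of_reaches h hcontrol
    _ ≤ 0 + 2 ^ (2 * m - 1) * 2 := by
        rw [hd]; gcongr
        · norm_num
        · omega
    _ = 4 ^ m := by rw [zero_add, ← pow_succ, Nat.sub_add_cancel (by omega), pow_mul]; norm_num

end Reaches

end HPState

open HPState in
/-- There is a population protocol whose reachability relation, viewed as the set of
pairs of count vectors `(C, C')` with `C →* C'`, is not semilinear. -/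
theorem exists_protocol_reachability_not_semilinear :
    ∃ (Q : Type) (_ : Fintype Q) (_ : DecidableEq Q)
      (rules : Finset ((Q × Q) × (Q × Q))),
      ¬ IsSemilinearSetNat
        {v : Q ⊕ Q → ℕ |
          Relation.ReflTransGen (CountStep rules) (fun s => v (Sum.inl s))
            (fun s => v (Sum.inr s))} := by
  refine ⟨HPState, inferInstance, inferInstance, rules, fun hS => ?_⟩
  obtain ⟨M, hM⟩ := hS.exists_pumpsDownAbove
  set m := M + 1
  have hMm : M < 4 ^ m := (Nat.lt_succ_self M).trans (Nat.lt_pow_self (by norm_num))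
  obtain ⟨nb, hreach⟩ := exists_reaches_doubling m 1 (2 * 4 ^ m) (by omega)
  set p : HPState ⊕ HPState → ℕ :=
    Sum.elim (config q₁ (2 * m) (2 * 4 ^ m) 1 0) (config q₁ 0 nb 0 (2 * 4 ^ m * 1))
  obtain ⟨w, hw, u, hwu, hua, huM⟩ :=
    hM p hreach (.inl a) (by simp only [p, Sum.elim_inl, config]; omega)
  have hpwu (s) : w s + u s = p s := (congrFun hwu s).symm
  have hwa := hpwu (.inl a)
  have hwd := hpwu (.inr d)
  simp only [p, Sum.elim_inl, Sum.elim_inr, config] at hwa hwd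
  have hd := count_d_le_of_reaches_of_le hw (fun s => Nat.le_of_add_right_le (hpwu (.inl s)).le)
    (by omega)
  have := huM (.inr d)
  omega
end

section
/- In the rank protocol on states {0, 1, …, n₀} with the single rule (k, k) → (k, min(k+1, n₀)) for each k, started from the all-zero configuration on a complete interaction graph with n agents: every fair execution reaches a configuration after which no agent's rank ever changes, and in any stable configuration (one in which no applicable transition changes any state), all ranks below n₀ are distinct, and the set of ranks occurring is an initial segment {0,…,m} for some m ≤ n₀. -/
/-- One step of the rank protocol with states `{0,…,n₀}`: two distinct agents with the
same rank `k` interact and the responder moves to rank `min (k+1) n₀`; interactions of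
agents with different ranks change nothing. -/
def RStep (n₀ : ℕ) {n : ℕ} (C C' : Fin n → ℕ) : Prop :=
  ∃ i r : Fin n, i ≠ r ∧ C i = C r ∧ C' = Function.update C r (min (C i + 1) n₀)

/-- A configuration is stable if no applicable step changes it. -/
def RStable (n₀ : ℕ) {n : ℕ} (C : Fin n → ℕ) : Prop :=
  ∀ C', RStep n₀ C C' → C' = C

/-- An execution: each step is either a protocol step or leaves the configuration
unchanged. -/
def RExec (n₀ : ℕ) {n : ℕ} (e : ℕ → Fin n → ℕ) : Prop :=
  ∀ k, RStep n₀ (e k) (e (k + 1)) ∨ e (k + 1) = e k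

/-- Global fairness: any configuration reachable in one step from a configuration
occurring infinitely often itself occurs infinitely often. -/
def RFair (n₀ : ℕ) {n : ℕ} (e : ℕ → Fin n → ℕ) : Prop :=
  ∀ C C', (∀ N, ∃ k ≥ N, e k = C) → RStep n₀ C C' → ∀ N, ∃ k ≥ N, e k = C'

lemma RStep.le' {n₀ n : ℕ} {C C' : Fin n → ℕ} (h : RStep n₀ C C')
    (hC : ∀ i, C i ≤ n₀) : ∀ i, C' i ≤ n₀ := by
  obtain ⟨i, r, hir, heq, hC'⟩ := h
  intro j
  subst hC'
  rcases eq_or_ne j r with rfl | hjr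
  · simp [Function.update_self, min_le_right]
  · simp [Function.update_of_ne hjr, hC j]

lemma RStep.sum' {n₀ n : ℕ} {C C' : Fin n → ℕ} (h : RStep n₀ C C')
    (hC : ∀ i, C i ≤ n₀) (hne : C' ≠ C) :
    ∑ i, C' i = (∑ i, C i) + 1 := by
  obtain ⟨i, r, hir, heq, hC'⟩ := h
  have hk : C r < n₀ := by
    rcases lt_or_eq_of_le (hC r) with h' | h'
    · exact h'
    · exfalso; apply hne
      rw [hC', heq, h', min_eq_right (Nat.le_succ n₀), ← h', Function.update_eq_self]
  have hmin : min (C i + 1) n₀ = C r + 1 := by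
    rw [heq]; exact min_eq_left hk
  subst hC'
  rw [hmin]
  rw [Finset.sum_update_of_mem (Finset.mem_univ r)]
  rw [show (∑ i, C i) = C r + ∑ x ∈ Finset.univ \ {r}, C x from ?_]
  · ring
  · rw [Finset.sum_eq_sum_sdiff_singleton_add (Finset.mem_univ r)]; ring

lemma RStep.range' {n₀ n : ℕ} {C C' : Fin n → ℕ} (h : RStep n₀ C C')
    {m : ℕ} (hm : m ≤ n₀) (hr : Set.range C = {r : ℕ | r ≤ m}) :
    ∃ m' ≤ n₀, Set.range C' = {r : ℕ | r ≤ m'} := by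
  obtain ⟨i, r, hir, heq, hC'⟩ := h
  have hCle : ∀ j, C j ≤ m := fun j => by
    have : C j ∈ Set.range C := ⟨j, rfl⟩
    rw [hr] at this; exact this
  set v := min (C i + 1) n₀ with hv
  have hvle : v ≤ m + 1 := le_trans (min_le_left _ _) (by have := hCle i; omega)
  refine ⟨max m v, max_le hm (min_le_right _ _), ?_⟩
  subst hC'
  ext x
  simp only [Set.mem_range, Set.mem_setOf_eq]
  constructor
  · rintro ⟨j, rfl⟩
    rcases eq_or_ne j r with rfl | hjr
    · simp [Function.update_self, le_max_right]
    · rw [Function.update_of_ne hjr]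
      exact le_max_of_le_left (hCle j)
  · intro hx
    rcases le_or_gt x m with hxm | hxm
    · have : x ∈ Set.range C := by rw [hr]; exact hxm
      obtain ⟨j, hj⟩ := this
      rcases eq_or_ne j r with rfl | hjr
      · exact ⟨i, by rw [Function.update_of_ne hir, heq, hj]⟩
      · exact ⟨j, by rw [Function.update_of_ne hjr, hj]⟩
    · have hxv : x = v := by
        rcases max_cases m v with ⟨h1, h2⟩ | ⟨h1, h2⟩ <;> omega
      exact ⟨r, by rw [Function.update_self, hxv]⟩

/-- Every fair execution of the rank protocol from the all-zero configuration reaches a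
configuration after which no rank changes; and every stable configuration reachable
from the all-zero configuration has pairwise distinct ranks below `n₀`, and its set of
ranks is an initial segment `{0,…,m}` for some `m ≤ n₀`. -/
theorem rank_protocol_stabilizes (n₀ n : ℕ) (hn : 1 ≤ n) :
    (∀ e : ℕ → Fin n → ℕ, RExec n₀ e → RFair n₀ e → e 0 = (fun _ => 0) →
      ∃ N, ∀ k ≥ N, e k = e N) ∧
    (∀ C : Fin n → ℕ,
      Relation.ReflTransGen (RStep n₀) (fun _ => 0) C → RStable n₀ C →
      (∀ i j : Fin n, i ≠ j → C i < n₀ → C i ≠ C j) ∧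
      ∃ m ≤ n₀, Set.range C = {r : ℕ | r ≤ m}) := by
  constructor
  · intro e he hf h0
    have hle : ∀ k i, e k i ≤ n₀ := by
      intro k
      induction k with
      | zero => intro i; rw [h0]; exact Nat.zero_le _
      | succ k ih =>
        rcases he k with h | h
        · exact h.le' ih
        · rw [h]; exact ih
    set S : ℕ → ℕ := fun k => ∑ i, e k i with hS
    have hSbd : ∀ k, S k ≤ n * n₀ := by
      intro k
      calc S k ≤ ∑ _i : Fin n, n₀ := Finset.sum_le_sum fun i _ => hle k i
        _ = n * n₀ := by simp [Finset.sum_const, Finset.card_univ]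
    have hstep : ∀ k, e (k + 1) = e k ∨ S (k + 1) = S k + 1 := by
      intro k
      rcases he k with h | h
      · rcases eq_or_ne (e (k+1)) (e k) with h' | h'
        · exact Or.inl h'
        · exact Or.inr (h.sum' (hle k) h')
      · exact Or.inl h
    have hmono : Monotone S := by
      apply monotone_nat_of_le_succ
      intro k
      rcases hstep k with h | h
      · simp [hS, h]
      · omega
    have hbdd : BddAbove (Set.range S) := ⟨n * n₀, by rintro x ⟨k, rfl⟩; exact hSbd k⟩
    have hmem : sSup (Set.range S) ∈ Set.range S :=
      Nat.sSup_mem ⟨S 0, ⟨0, rfl⟩⟩ hbdd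
    obtain ⟨N, hN⟩ := hmem
    refine ⟨N, ?_⟩
    intro k hk
    induction k, hk using Nat.le_induction with
    | base => rfl
    | succ k hk ih =>
      rcases hstep k with h | h
      · rw [h, ih]
      · exfalso
        have h1 : S k ≤ sSup (Set.range S) := le_csSup hbdd ⟨k, rfl⟩
        have h2 : S (k + 1) ≤ sSup (Set.range S) := le_csSup hbdd ⟨k + 1, rfl⟩
        have h3 : S N ≤ S k := hmono hk
        omega
  · intro C hreach hstab
    constructor
    · intro i j hij hlt heq
      have hstep : RStep n₀ C (Function.update C j (min (C i + 1) n₀)) :=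
        ⟨i, j, hij, heq, rfl⟩
      have := congrFun (hstab _ hstep) j
      rw [Function.update_self] at this
      have : min (C i + 1) n₀ = C i + 1 := min_eq_left hlt
      omega
    · have : ∀ D : Fin n → ℕ, Relation.ReflTransGen (RStep n₀) (fun _ => 0) D →
          ∃ m ≤ n₀, Set.range D = {r : ℕ | r ≤ m} := by
        intro D hD
        induction hD with
        | refl =>
          refine ⟨0, Nat.zero_le _, ?_⟩
          ext x
          simp only [Set.mem_range, Set.mem_setOf_eq, Nat.le_zero]
          constructor
          · rintro ⟨j, rfl⟩; rfl
          · rintro rfl; exact ⟨⟨0, hn⟩, rfl⟩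
        | tail hbc hstep ih =>
          obtain ⟨m, hm, hr⟩ := ih
          exact hstep.range' hm hr
      exact this C hreach
end

section
/- In the rank protocol with rule (k,k) → (k, min(k+1, n₀)) started from the all-zero configuration with n agents: at every reachable configuration, for each j with 1 ≤ j ≤ n₀, at least one agent has rank < j whenever n ≥ 1; in particular at least one agent always has rank 0. -/
/-- In every configuration reachable from the all-zero configuration of the rank
protocol (with `n ≥ 1` agents), for each `j` with `1 ≤ j ≤ n₀` some agent has rank
below `j`; in particular some agent always has rank `0`. -/
theorem rank_zero_occupied (n₀ n : ℕ) (hn : 1 ≤ n) (C : Fin n → ℕ)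
    (hreach : Relation.ReflTransGen (RStep n₀) (fun _ => 0) C) :
    (∀ j, 1 ≤ j → j ≤ n₀ → ∃ i, C i < j) ∧ ∃ i, C i = 0 := by
  have hz : ∃ i, C i = 0 := by
    induction hreach with
    | refl => exact ⟨⟨0, hn⟩, rfl⟩
    | tail _ h ih =>
      obtain ⟨i0, hi0⟩ := ih
      obtain ⟨i, r, hir, heq, hupd⟩ := h
      subst hupd
      by_cases hcase : i0 = r
      · refine ⟨i, ?_⟩
        rw [Function.update_of_ne hir, heq, ← hcase, hi0]
      · exact ⟨i0, by rw [Function.update_of_ne hcase, hi0]⟩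
  exact ⟨fun j hj _ => hz.imp fun i hi => by omega, hz⟩
end

section
/- In the rank protocol with rule (k,k) → (k, min(k+1,n₀)) started from the all-zero configuration with n < n₀ agents on a complete graph: the configuration assigning the n distinct ranks 0, 1, …, n−1 to the n agents (in any order) is reachable, and it is stable (no transition changes it). -/
/-!
From the all-zero configuration, the truncations `fun i => min (C i) m` are reached for
`m = 0, 1, …, n` in turn: the agent of final rank `m` sits at rank `m` together with every
agent of larger final rank, and it lifts those to `m + 1` one at a time.
-/

theorem rStable_of_injective (n₀ : ℕ) {n : ℕ} {C : Fin n → ℕ}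
    (hinj : Function.Injective C) : RStable n₀ C := by
  rintro C' ⟨i, r, hir, heq, -⟩
  exact absurd (hinj heq) hir

theorem rStep_update {n₀ n : ℕ} {C : Fin n → ℕ} {a r : Fin n} {k : ℕ} (har : a ≠ r)
    (ha : C a = k) (hr : C r = k) (hk : k < n₀) :
    RStep n₀ C (Function.update C r (k + 1)) :=
  ⟨a, r, har, ha.trans hr.symm, by rw [ha, min_eq_left hk]⟩

theorem reflTransGen_rStep_raise {n₀ n : ℕ} {C : Fin n → ℕ} {a : Fin n} {k : ℕ}
    (ha : C a = k) (hk : k < n₀) (S : Finset (Fin n)) (haS : a ∉ S)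
    (hS : ∀ r ∈ S, C r = k) :
    Relation.ReflTransGen (RStep n₀) C (fun i => if i ∈ S then k + 1 else C i) := by
  classical
  induction S using Finset.induction_on with
  | empty => simp only [Finset.notMem_empty, if_false]; rfl
  | insert r S hrS ih =>
    have haS' : a ∉ S := fun h => haS (Finset.mem_insert_of_mem h)
    refine (ih haS' fun i hi => hS i (Finset.mem_insert_of_mem hi)).tail ?_
    have hraised : (fun i => if i ∈ insert r S then k + 1 else C i)
        = Function.update (fun i => if i ∈ S then k + 1 else C i) r (k + 1) := by
      funext i
      by_cases hi : i = r <;> simp [hi]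
    rw [hraised]
    have har : a ≠ r := by rintro rfl; exact haS (Finset.mem_insert_self a S)
    refine rStep_update (a := a) har ?_ ?_ hk
    · simp [haS', ha]
    · simp [hrS, hS r (Finset.mem_insert_self r S)]

theorem exists_apply_eq_of_injective_of_lt {n : ℕ} {C : Fin n → ℕ}
    (hinj : Function.Injective C) (hlt : ∀ i, C i < n) {m : ℕ} (hm : m < n) :
    ∃ a, C a = m := by
  have hsurj : Function.Surjective (fun i => (⟨C i, hlt i⟩ : Fin n)) :=
    Finite.surjective_of_injective fun a b h => hinj (congrArg Fin.val h)
  obtain ⟨a, ha⟩ := hsurj ⟨m, hm⟩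
  exact ⟨a, congrArg Fin.val ha⟩

theorem reflTransGen_rStep_min_succ {n₀ n : ℕ} {C : Fin n → ℕ} {a : Fin n} {m : ℕ}
    (ha : C a = m) (hm : m < n₀) :
    Relation.ReflTransGen (RStep n₀) (fun i => min (C i) m) (fun i => min (C i) (m + 1)) := by
  classical
  have hraise := reflTransGen_rStep_raise (C := fun i => min (C i) m) (a := a) (by simp [ha]) hm
    (Finset.univ.filter fun i => m < C i) (by simp [ha])
    (fun r hr => min_eq_right (Finset.mem_filter.mp hr).2.le)
  convert hraise using 2 with i
  by_cases hi : m < C i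
  · simp [hi]
  · have hi' : C i ≤ m := Nat.le_of_not_lt hi
    simp [hi, min_eq_left hi', min_eq_left (Nat.le_succ_of_le hi')]

theorem rank_distinct_reachable_stable_general (n₀ n : ℕ) (hnn₀ : n < n₀)
    (C : Fin n → ℕ) (hinj : Function.Injective C) (hlt : ∀ i, C i < n) :
    Relation.ReflTransGen (RStep n₀) (fun _ => 0) C ∧ RStable n₀ C := by
  have htrunc : ∀ m ≤ n,
      Relation.ReflTransGen (RStep n₀) (fun _ => 0) (fun i => min (C i) m) := by
    intro m hm
    induction m with
    | zero => simp only [Nat.min_zero]; rfl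
    | succ m ih =>
      obtain ⟨a, ha⟩ := exists_apply_eq_of_injective_of_lt hinj hlt hm
      exact (ih (by omega)).trans (reflTransGen_rStep_min_succ ha (by omega))
  have hC : (fun i => min (C i) n) = C := funext fun i => min_eq_left (hlt i).le
  exact ⟨hC ▸ htrunc n le_rfl, rStable_of_injective n₀ hinj⟩

/-- For `n < n₀` agents, any configuration assigning the `n` distinct ranks
`0, 1, …, n−1` (in any order) is reachable from the all-zero configuration,
and it is stable. -/
theorem rank_distinct_reachable_stable (n₀ n : ℕ) (hn : 1 ≤ n) (hnn₀ : n < n₀)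
    (C : Fin n → ℕ) (hinj : Function.Injective C) (hlt : ∀ i, C i < n) :
    Relation.ReflTransGen (RStep n₀) (fun _ => 0) C ∧ RStable n₀ C :=
  rank_distinct_reachable_stable_general n₀ n hnn₀ C hinj hlt
end
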